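/- arXiv:2304.02226 — 2 statements merged into one kernel-verified Lean document; each statement's English description precedes it below -/
import Mathlib

section
/- For a product of channels, the optimal two-message Chernoff exponent is subadditive: if P_hat = P^{(1)} × ⋯ × P^{(k)} is the product channel, then max over input pairs (x⃗,x⃗') of d_C(x⃗, x⃗', P_hat) is at most Σ_{i=1}^k max over pairs (x,x') of d_C(x, x', P^{(i)}). -/
/-!
The Chernoff coefficient `∑ y, p y ^ (1 - s) * q y ^ s` of a product channel is the product of
the coefficients of its components, so for fixed product inputs and fixed `s` its `-log` is the sum
of the component exponents, each at most the optimal exponent of its component. Every coefficient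
lies in `[0, 1]` by weighted AM-GM, so the junk value `log 0 = 0` can only lower the left side.
The component suprema are genuine since `-log (chernoffCoeff p q s) ≤ max 0 (-log ∑ y, p y * q y)`:
for disjoint supports the coefficient vanishes on `(0, 1)`, and `log 0 = 0` keeps this finite.
-/

open Real Finset Set

lemma le_ciSup_ciSup_ciSup {α β γ L : Type*} [Finite α] [Finite β]
    [ConditionallyCompleteLattice L] {f : α → β → γ → L} (hf : ∀ a b, BddAbove (range (f a b)))
    (a : α) (b : β) (c : γ) : f a b c ≤ ⨆ a, ⨆ b, ⨆ c, f a b c :=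
  calc f a b c ≤ ⨆ c, f a b c := le_ciSup (hf a b) c
    _ ≤ ⨆ b, ⨆ c, f a b c := le_ciSup (f := fun b => ⨆ c, f a b c) (finite_range _).bddAbove b
    _ ≤ ⨆ a, ⨆ b, ⨆ c, f a b c :=
      le_ciSup (f := fun a => ⨆ b, ⨆ c, f a b c) (finite_range _).bddAbove a

lemma Real.neg_log_prod_le_sum_neg_log {ι : Type*} (s : Finset ι) {g : ι → ℝ}
    (h0 : ∀ i ∈ s, 0 ≤ g i) (h1 : ∀ i ∈ s, g i ≤ 1) :
    -log (∏ i ∈ s, g i) ≤ ∑ i ∈ s, -log (g i) := by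
  by_cases hz : ∃ i ∈ s, g i = 0
  · obtain ⟨i, hi, hgi⟩ := hz
    rw [prod_eq_zero hi hgi, log_zero, neg_zero]
    exact sum_nonneg fun i hi => neg_nonneg.2 (log_nonpos (h0 i hi) (h1 i hi))
  · push Not at hz
    rw [log_prod hz, sum_neg_distrib]

lemma Real.mul_le_rpow_mul_rpow {a b s : ℝ} (ha0 : 0 ≤ a) (ha1 : a ≤ 1) (hb0 : 0 ≤ b)
    (hb1 : b ≤ 1) (hs : s ∈ Icc (0 : ℝ) 1) : a * b ≤ a ^ (1 - s) * b ^ s :=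
  mul_le_mul (self_le_rpow_of_le_one ha0 ha1 (by linarith [hs.1]))
    (self_le_rpow_of_le_one hb0 hb1 hs.2) hb0 (rpow_nonneg ha0 _)

noncomputable def chernoffCoeff {Y : Type*} [Fintype Y] (p q : Y → ℝ) (s : ℝ) : ℝ :=
  ∑ y, p y ^ (1 - s) * q y ^ s

section chernoffCoeff

variable {Y : Type*} [Fintype Y] {p q : Y → ℝ}

lemma chernoffCoeff_nonneg (hp : 0 ≤ p) (hq : 0 ≤ q) (s : ℝ) : 0 ≤ chernoffCoeff p q s :=
  sum_nonneg fun y _ => mul_nonneg (rpow_nonneg (hp y) _) (rpow_nonneg (hq y) _)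

lemma chernoffCoeff_le_one (hp : 0 ≤ p) (hq : 0 ≤ q) (hp1 : ∑ y, p y = 1) (hq1 : ∑ y, q y = 1)
    {s : ℝ} (hs : s ∈ Icc (0 : ℝ) 1) : chernoffCoeff p q s ≤ 1 :=
  calc chernoffCoeff p q s ≤ ∑ y, ((1 - s) * p y + s * q y) :=
        sum_le_sum fun y _ => geom_mean_le_arith_mean2_weighted (by linarith [hs.2]) hs.1
          (hp y) (hq y) (by ring)
    _ = 1 := by rw [sum_add_distrib, ← mul_sum, ← mul_sum, hp1, hq1]; ring

lemma chernoffCoeff_zero (hp1 : ∑ y, p y = 1) : chernoffCoeff p q 0 = 1 := by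
  simpa [chernoffCoeff] using hp1

lemma chernoffCoeff_one (hq1 : ∑ y, q y = 1) : chernoffCoeff p q 1 = 1 := by
  simpa [chernoffCoeff] using hq1

lemma chernoffCoeff_eq_zero_of_sum_mul_eq_zero (hp : 0 ≤ p) (hq : 0 ≤ q)
    (hpq : ∑ y, p y * q y = 0) {s : ℝ} (hs : s ∈ Ioo (0 : ℝ) 1) : chernoffCoeff p q s = 0 := by
  refine sum_eq_zero fun y _ => ?_
  rcases mul_eq_zero.1 ((sum_eq_zero_iff_of_nonneg fun y _ => mul_nonneg (hp y) (hq y)).1 hpq y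
    (mem_univ y)) with h | h
  · rw [h, zero_rpow (by linarith [hs.2]), zero_mul]
  · rw [h, zero_rpow hs.1.ne', mul_zero]

lemma sum_mul_le_chernoffCoeff (hp : 0 ≤ p) (hq : 0 ≤ q) (hp1 : ∑ y, p y = 1)
    (hq1 : ∑ y, q y = 1) {s : ℝ} (hs : s ∈ Icc (0 : ℝ) 1) :
    ∑ y, p y * q y ≤ chernoffCoeff p q s :=
  have le_one {r : Y → ℝ} (hr : 0 ≤ r) (hr1 : ∑ y, r y = 1) (y : Y) : r y ≤ 1 :=
    hr1 ▸ single_le_sum (fun y _ => hr y) (mem_univ y)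
  sum_le_sum fun y _ => mul_le_rpow_mul_rpow (hp y) (le_one hp hp1 y) (hq y) (le_one hq hq1 y) hs

lemma neg_log_chernoffCoeff_le (hp : 0 ≤ p) (hq : 0 ≤ q) (hp1 : ∑ y, p y = 1)
    (hq1 : ∑ y, q y = 1) {s : ℝ} (hs : s ∈ Icc (0 : ℝ) 1) :
    -log (chernoffCoeff p q s) ≤ max 0 (-log (∑ y, p y * q y)) := by
  rcases hs.1.eq_or_lt with rfl | hs0
  · simp [chernoffCoeff_zero hp1]
  rcases hs.2.eq_or_lt with rfl | hs1
  · simp [chernoffCoeff_one hq1]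
  by_cases hpq : ∑ y, p y * q y = 0
  · simp [chernoffCoeff_eq_zero_of_sum_mul_eq_zero hp hq hpq ⟨hs0, hs1⟩]
  · have hpq_pos : 0 < ∑ y, p y * q y :=
      (sum_nonneg fun y _ => mul_nonneg (hp y) (hq y)).lt_of_ne' hpq
    refine le_max_of_le_right (neg_le_neg (log_le_log hpq_pos ?_))
    exact sum_mul_le_chernoffCoeff hp hq hp1 hq1 hs

lemma bddAbove_range_neg_log_chernoffCoeff (hp : 0 ≤ p) (hq : 0 ≤ q) (hp1 : ∑ y, p y = 1)
    (hq1 : ∑ y, q y = 1) :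
    BddAbove (range fun s : Icc (0 : ℝ) 1 => -log (chernoffCoeff p q s)) :=
  ⟨_, forall_mem_range.2 fun s => neg_log_chernoffCoeff_le hp hq hp1 hq1 s.2⟩

end chernoffCoeff

lemma chernoffCoeff_pi {ι : Type*} [Fintype ι] [DecidableEq ι] {Y : ι → Type*}
    [∀ i, Fintype (Y i)] {p q : ∀ i, Y i → ℝ} (hp : ∀ i, 0 ≤ p i) (hq : ∀ i, 0 ≤ q i) (s : ℝ) :
    chernoffCoeff (fun y : ∀ i, Y i => ∏ i, p i (y i)) (fun y => ∏ i, q i (y i)) s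
      = ∏ i, chernoffCoeff (p i) (q i) s := by
  unfold chernoffCoeff
  rw [Fintype.prod_sum]
  refine sum_congr rfl fun y _ => ?_
  rw [← finsetProd_rpow _ _ (fun i _ => hp i (y i)), ← finsetProd_rpow _ _ (fun i _ => hq i (y i)),
    ← prod_mul_distrib]

theorem stmt4_general {k : ℕ} (X Y : Fin k → Type*)
    [∀ i, Fintype (X i)] [∀ i, Fintype (Y i)]
    [∀ i, Nonempty (X i)]
    (P : ∀ i, X i → Y i → ℝ)
    (hP0 : ∀ i x y, 0 ≤ P i x y) (hP1 : ∀ i x, ∑ y, P i x y = 1) :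
    (⨆ x : ∀ i, X i, ⨆ x' : ∀ i, X i, ⨆ s : Set.Icc (0:ℝ) 1,
        - Real.log (∑ y : ∀ i, Y i,
          (∏ i, P i (x i) (y i)) ^ (1 - (s:ℝ)) * (∏ i, P i (x' i) (y i)) ^ (s:ℝ)))
      ≤ ∑ i, ⨆ x : X i, ⨆ x' : X i, ⨆ s : Set.Icc (0:ℝ) 1,
          - Real.log (∑ y, (P i x y) ^ (1 - (s:ℝ)) * (P i x' y) ^ (s:ℝ)) := by
  have hP : ∀ i x, 0 ≤ P i x := fun i x y => hP0 i x y
  have le_optimal (i : Fin k) (a b : X i) (s : Icc (0 : ℝ) 1) :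
      -log (chernoffCoeff (P i a) (P i b) s) ≤ ⨆ x : X i, ⨆ x' : X i, ⨆ s : Set.Icc (0:ℝ) 1,
          - Real.log (∑ y, (P i x y) ^ (1 - (s:ℝ)) * (P i x' y) ^ (s:ℝ)) :=
    le_ciSup_ciSup_ciSup (f := fun x x' (s : Icc (0 : ℝ) 1) =>
      -log (chernoffCoeff (P i x) (P i x') s)) (fun a b =>
        bddAbove_range_neg_log_chernoffCoeff (hP i a) (hP i b) (hP1 i a) (hP1 i b)) a b s
  refine ciSup_le fun x => ciSup_le fun x' => ciSup_le fun s => ?_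
  change -log (chernoffCoeff (fun y : ∀ i, Y i => ∏ i, P i (x i) (y i))
    (fun y => ∏ i, P i (x' i) (y i)) s) ≤ _
  rw [chernoffCoeff_pi (fun i => hP i _) (fun i => hP i _)]
  calc -log (∏ i, chernoffCoeff (P i (x i)) (P i (x' i)) s)
      ≤ ∑ i, -log (chernoffCoeff (P i (x i)) (P i (x' i)) s) :=
        neg_log_prod_le_sum_neg_log _ (fun i _ => chernoffCoeff_nonneg (hP i _) (hP i _) s)
          fun i _ => chernoffCoeff_le_one (hP i _) (hP i _) (hP1 i _) (hP1 i _) s.2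
    _ ≤ _ := sum_le_sum fun i _ => le_optimal i (x i) (x' i) s

/-- Subadditivity of the optimal two-message Chernoff exponent over product channels:
`max_{x⃗,x⃗'} d_C(x⃗,x⃗',P_hat) ≤ Σ_i max_{x,x'} d_C(x,x',P⁽ⁱ⁾)`. -/
theorem stmt4 {k : ℕ} (X Y : Fin k → Type*)
    [∀ i, Fintype (X i)] [∀ i, Fintype (Y i)]
    [∀ i, Nonempty (X i)] [∀ i, Nonempty (Y i)]
    (P : ∀ i, X i → Y i → ℝ)
    (hP0 : ∀ i x y, 0 ≤ P i x y) (hP1 : ∀ i x, ∑ y, P i x y = 1) :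
    (⨆ x : ∀ i, X i, ⨆ x' : ∀ i, X i, ⨆ s : Set.Icc (0:ℝ) 1,
        - Real.log (∑ y : ∀ i, Y i,
          (∏ i, P i (x i) (y i)) ^ (1 - (s:ℝ)) * (∏ i, P i (x' i) (y i)) ^ (s:ℝ)))
      ≤ ∑ i, ⨆ x : X i, ⨆ x' : X i, ⨆ s : Set.Icc (0:ℝ) 1,
          - Real.log (∑ y, (P i x y) ^ (1 - (s:ℝ)) * (P i x' y) ^ (s:ℝ)) :=
  stmt4_general X Y P hP0 hP1
end

section
/- For any DMC P and any M ≥ 2, the Bhattacharyya-based exponent satisfies Ẽ_{M,P} ≥ E_P(0) ≥ ((M-1)/M) · Ẽ_{M,P}, where E_P(0) = max over probability distributions q on the input alphabet of Σ_{x,x'} q(x) q(x') d_B(x, x', P). Consequently, lim_{M→∞} Ẽ_{M,P} = E_P(0). -/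
/-!
Let `Q(q) = ∑ q(a) q(b) d(a, b)` and let `S_M` be the largest pair sum `∑_{i<j} d(x_i, x_j)` of
an `M`-tuple. Drawing the `M` codewords independently with law `q`, each of the `M(M-1)` ordered
pairs of distinct positions contributes `Q(q)` on average, so `M(M-1) Q(q) ≤ 2 S_M` and
`E(0) ≤ Ẽ_M`. Conversely, the empirical distribution of an optimal `M`-tuple has
`Q = 2 S_M / M²`, whence `((M-1)/M) Ẽ_M ≤ E(0)`. The limit follows by squeezing.
-/

open Finset Filter Topology

noncomputable section

variable {X : Type*}

theorem sum_pi_prod_eq_one [Fintype X] {ι : Type*} [Fintype ι] [DecidableEq ι] {q : X → ℝ}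
    (hq : ∑ a, q a = 1) : ∑ x : ι → X, ∏ m, q (x m) = 1 := by
  simp [← Fintype.prod_sum, hq]

theorem sum_pi_prod_mul_eq_sum_mul_sum [Fintype X] {ι : Type*} [Fintype ι] [DecidableEq ι]
    (q : X → ℝ) (i : ι) (F : (ι → X) → ℝ) :
    ∑ x : ι → X, (∏ m, q (x m)) * F x =
      ∑ a, q a * ∑ z : {j // j ≠ i} → X,
        (∏ m, q (z m)) * F ((Equiv.funSplitAt i X).symm (a, z)) := by
  rw [← (Equiv.funSplitAt i X).symm.sum_comp, Fintype.sum_prod_type]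
  refine sum_congr rfl fun a _ => ?_
  have hrest : ∀ (z : {j // j ≠ i} → X) (j : {j // j ≠ i}),
      (Equiv.funSplitAt i X).symm (a, z) j = z j := fun z j => dif_neg j.2
  simp only [Fintype.prod_eq_mul_prod_subtype_ne _ i, hrest, mul_sum, mul_assoc]
  simp

theorem sum_pi_prod_mul_apply [Fintype X] {ι : Type*} [Fintype ι] [DecidableEq ι] {q : X → ℝ}
    (hq : ∑ a, q a = 1) (i : ι) (h : X → ℝ) :
    ∑ x : ι → X, (∏ m, q (x m)) * h (x i) = ∑ a, q a * h a := by
  rw [sum_pi_prod_mul_eq_sum_mul_sum q i]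
  simp [← sum_mul, sum_pi_prod_eq_one hq]

theorem sum_pi_prod_mul_apply_apply [Fintype X] {ι : Type*} [Fintype ι] [DecidableEq ι]
    {q : X → ℝ} (hq : ∑ a, q a = 1) {i j : ι} (hij : i ≠ j) (g : X → X → ℝ) :
    ∑ x : ι → X, (∏ m, q (x m)) * g (x i) (x j) = ∑ a, ∑ b, q a * q b * g a b := by
  rw [sum_pi_prod_mul_eq_sum_mul_sum q i]
  simp [hij.symm, sum_pi_prod_mul_apply hq, mul_sum, mul_assoc]

theorem sum_card_fiber_mul [Fintype X] [DecidableEq X] {ι : Type*} [Fintype ι] (x : ι → X)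
    (h : X → ℝ) : ∑ a, (#{m | x m = a} : ℝ) * h a = ∑ m, h (x m) := by
  rw [← sum_fiberwise' univ x h]
  simp [sum_const, nsmul_eq_mul]

def pairSum {M : ℕ} (d : X → X → ℝ) (x : Fin M → X) : ℝ :=
  ∑ p ∈ univ.filter (fun p : Fin M × Fin M => p.1 < p.2), d (x p.1) (x p.2)

def quadForm [Fintype X] (d : X → X → ℝ) (q : X → ℝ) : ℝ :=
  ∑ a, ∑ b, q a * q b * d a b

theorem sum_pairs_eq_two_mul_pairSum {d : X → X → ℝ} (hsymm : ∀ a b, d a b = d b a)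
    (hdiag : ∀ a, d a a = 0) {M : ℕ} (x : Fin M → X) :
    ∑ p : Fin M × Fin M, d (x p.1) (x p.2) = 2 * pairSum d x := by
  have hsplit : ∀ p : Fin M × Fin M, d (x p.1) (x p.2) =
      (if p.1 < p.2 then d (x p.1) (x p.2) else 0) +
        (if p.2 < p.1 then d (x p.2) (x p.1) else 0) := by
    rintro ⟨i, j⟩
    rcases lt_trichotomy i j with h | rfl | h
    · simp [h, h.not_gt]
    · simp [hdiag]
    · simp [h, h.not_gt, hsymm]
  have hswap : ∑ p : Fin M × Fin M, (if p.2 < p.1 then d (x p.2) (x p.1) else 0) =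
      ∑ p : Fin M × Fin M, (if p.1 < p.2 then d (x p.1) (x p.2) else 0) :=
    Fintype.sum_equiv (Equiv.prodComm _ _) _ _ fun _ => rfl
  rw [Fintype.sum_congr _ _ hsplit, sum_add_distrib, hswap, ← two_mul, pairSum, sum_filter]

theorem sum_pi_prod_mul_sum_pairs [Fintype X] {d : X → X → ℝ} (hdiag : ∀ a, d a a = 0)
    {q : X → ℝ} (hq : ∑ a, q a = 1) (M : ℕ) :
    ∑ x : Fin M → X, (∏ m, q (x m)) * ∑ p : Fin M × Fin M, d (x p.1) (x p.2) =
      M * (M - 1) * quadForm d q := by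
  have hterm : ∀ p : Fin M × Fin M, ∑ x : Fin M → X, (∏ m, q (x m)) * d (x p.1) (x p.2) =
      if p.1 = p.2 then 0 else quadForm d q := by
    rintro ⟨i, j⟩
    split_ifs with h
    · obtain rfl : i = j := h
      simp [hdiag]
    · exact sum_pi_prod_mul_apply_apply hq h d
  have hoff : ({p : Fin M × Fin M | ¬p.1 = p.2} : Finset _) = univ.offDiag := by ext; simp
  simp_rw [mul_sum]
  rw [sum_comm, Fintype.sum_congr _ _ hterm, sum_ite, sum_const_zero, zero_add, sum_const,
    nsmul_eq_mul, hoff, offDiag_card, card_univ, Fintype.card_fin,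
    Nat.cast_sub (Nat.le_mul_self M)]
  push_cast
  ring

theorem mul_quadForm_le_two_mul_iSup_pairSum [Fintype X] {d : X → X → ℝ}
    (hsymm : ∀ a b, d a b = d b a) (hdiag : ∀ a, d a a = 0) {q : X → ℝ}
    (hq : q ∈ stdSimplex ℝ X) (M : ℕ) :
    M * (M - 1) * quadForm d q ≤ 2 * ⨆ x : Fin M → X, pairSum d x := by
  obtain ⟨hq0, hq1⟩ := hq
  have hbdd := (Set.finite_range fun x : Fin M → X => pairSum d x).bddAbove
  calc (M : ℝ) * (M - 1) * quadForm d q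
      = ∑ x : Fin M → X, (∏ m, q (x m)) * (2 * pairSum d x) := by
        simp_rw [← sum_pairs_eq_two_mul_pairSum hsymm hdiag]
        exact (sum_pi_prod_mul_sum_pairs hdiag hq1 M).symm
    _ ≤ ∑ x : Fin M → X, (∏ m, q (x m)) * (2 * ⨆ x, pairSum d x) := by
        gcongr with x
        · exact prod_nonneg fun m _ => hq0 _
        · exact le_ciSup hbdd x
    _ = 2 * ⨆ x, pairSum d x := by rw [← sum_mul, sum_pi_prod_eq_one hq1, one_mul]

def empiricalDist [DecidableEq X] {M : ℕ} (x : Fin M → X) (a : X) : ℝ :=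
  #{m | x m = a} / M

theorem empiricalDist_mem_stdSimplex [Fintype X] [DecidableEq X] {M : ℕ} (hM : M ≠ 0)
    (x : Fin M → X) : empiricalDist x ∈ stdSimplex ℝ X := by
  refine ⟨fun a => by unfold empiricalDist; positivity, ?_⟩
  have hcount := sum_card_fiber_mul x fun _ => 1
  simp only [mul_one, sum_const, card_univ, Fintype.card_fin, nsmul_eq_mul] at hcount
  simp only [empiricalDist, ← sum_div, hcount, div_self ((Nat.cast_ne_zero (R := ℝ)).2 hM)]

theorem quadForm_empiricalDist [Fintype X] [DecidableEq X] (d : X → X → ℝ) {M : ℕ}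
    (x : Fin M → X) :
    quadForm d (empiricalDist x) = (∑ p : Fin M × Fin M, d (x p.1) (x p.2)) / M ^ 2 := by
  have hcount : ∑ a, ∑ b, (#{m | x m = a} : ℝ) * #{m | x m = b} * d a b =
      ∑ p : Fin M × Fin M, d (x p.1) (x p.2) := by
    simp_rw [mul_assoc, ← mul_sum, sum_card_fiber_mul, Fintype.sum_prod_type]
  simp only [← hcount, quadForm, empiricalDist, sum_div]
  refine sum_congr rfl fun a _ => sum_congr rfl fun b _ => ?_
  ring

def codeExponent (d : X → X → ℝ) (M : ℕ) : ℝ :=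
  2 / (M * (M - 1)) * ⨆ x : Fin M → X, pairSum d x

def zeroRateExponent [Fintype X] (d : X → X → ℝ) : ℝ :=
  ⨆ q : stdSimplex ℝ X, quadForm d q.1

theorem bddAbove_quadForm [Fintype X] (d : X → X → ℝ) :
    BddAbove (Set.range fun q : stdSimplex ℝ X => quadForm d q.1) := by
  rw [← Set.image_eq_range]
  exact (isCompact_stdSimplex ℝ X).bddAbove_image (by unfold quadForm; fun_prop)

theorem zeroRateExponent_le_codeExponent [Fintype X] [Nonempty X] {d : X → X → ℝ}
    (hsymm : ∀ a b, d a b = d b a) (hdiag : ∀ a, d a a = 0) {M : ℕ} (hM : 2 ≤ M) :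
    zeroRateExponent d ≤ codeExponent d M := by
  have hpos : (0 : ℝ) < M * (M - 1) := by
    have : (2 : ℝ) ≤ M := by exact_mod_cast hM
    nlinarith
  refine ciSup_le fun q => ?_
  rw [codeExponent, div_mul_eq_mul_div, le_div_iff₀ hpos, mul_comm]
  exact mul_quadForm_le_two_mul_iSup_pairSum hsymm hdiag q.2 M

theorem mul_codeExponent_le_zeroRateExponent [Fintype X] [Nonempty X] {d : X → X → ℝ}
    (hsymm : ∀ a b, d a b = d b a) (hdiag : ∀ a, d a a = 0) {M : ℕ} (hM : 2 ≤ M) :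
    (M - 1) / M * codeExponent d M ≤ zeroRateExponent d := by
  classical
  have hM0 : (M : ℝ) ≠ 0 := by positivity
  have hM1 : (M : ℝ) - 1 ≠ 0 := by
    have : (2 : ℝ) ≤ M := by exact_mod_cast hM
    linarith
  have hcoef : ((M : ℝ) - 1) / M * (2 / (M * (M - 1))) = 2 / M ^ 2 := by field_simp
  rw [codeExponent, ← mul_assoc, hcoef, Real.mul_iSup_of_nonneg (by positivity)]
  refine ciSup_le fun x => ?_
  have hx : 2 / (M : ℝ) ^ 2 * pairSum d x = quadForm d (empiricalDist x) := by
    rw [quadForm_empiricalDist, sum_pairs_eq_two_mul_pairSum hsymm hdiag]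
    ring
  rw [hx]
  exact le_ciSup (bddAbove_quadForm d) ⟨_, empiricalDist_mem_stdSimplex (by omega) x⟩

end

theorem tendsto_of_le_of_mul_le {f : ℕ → ℝ} {L : ℝ}
    (h : ∀ M : ℕ, 2 ≤ M → L ≤ f M ∧ ((M : ℝ) - 1) / M * f M ≤ L) :
    Tendsto f atTop (𝓝 L) := by
  have hupper : Tendsto (fun M : ℕ => (M : ℝ) / (M + -1) * L) atTop (𝓝 L) := by
    simpa using (tendsto_natCast_div_add_atTop (-1 : ℝ)).mul_const L
  refine tendsto_of_tendsto_of_tendsto_of_le_of_le' tendsto_const_nhds hupper ?_ ?_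
  · filter_upwards [eventually_ge_atTop 2] with M hM using (h M hM).1
  · filter_upwards [eventually_ge_atTop 2] with M hM
    have hM' : (2 : ℝ) ≤ M := by exact_mod_cast hM
    have hle := (h M hM).2
    rw [div_mul_eq_mul_div, div_le_iff₀ (by linarith)] at hle
    rw [← sub_eq_add_neg, div_mul_eq_mul_div, le_div_iff₀ (by linarith)]
    linarith

section Bhattacharyya

variable {X Y : Type*} [Fintype Y]

noncomputable def bhattacharyyaDist (P : X → Y → ℝ) (a b : X) : ℝ :=
  -Real.log (∑ y, Real.sqrt (P a y * P b y))

theorem bhattacharyyaDist_comm (P : X → Y → ℝ) (a b : X) :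
    bhattacharyyaDist P a b = bhattacharyyaDist P b a := by
  simp only [bhattacharyyaDist, mul_comm]

theorem bhattacharyyaDist_self {P : X → Y → ℝ} (hP0 : ∀ x y, 0 ≤ P x y)
    (hP1 : ∀ x, ∑ y, P x y = 1) (a : X) : bhattacharyyaDist P a a = 0 := by
  simp [bhattacharyyaDist, Real.sqrt_mul_self (hP0 a _), hP1]

end Bhattacharyya

/-- For any DMC `P` and `M ≥ 2`, `Ẽ_{M,P} ≥ E_P(0) ≥ ((M-1)/M) Ẽ_{M,P}`, where
`E_P(0)` is Berlekamp's zero-rate exponent; consequently `Ẽ_{M,P} → E_P(0)` as `M → ∞`. -/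
theorem stmt7 {X Y : Type*} [Fintype X] [Fintype Y] [Nonempty X]
    (P : X → Y → ℝ)
    (hP0 : ∀ x y, 0 ≤ P x y) (hP1 : ∀ x, ∑ y, P x y = 1) :
    let dB : X → X → ℝ := fun x x' => - Real.log (∑ y, Real.sqrt (P x y * P x' y))
    let Etil : ℕ → ℝ := fun M => (2 / ((M:ℝ) * ((M:ℝ) - 1))) *
      ⨆ x : Fin M → X,
        ∑ p ∈ Finset.univ.filter (fun p : Fin M × Fin M => p.1 < p.2), dB (x p.1) (x p.2)
    let E0 : ℝ := ⨆ q : {q : X → ℝ // (∀ x, 0 ≤ q x) ∧ ∑ x, q x = 1},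
      ∑ x, ∑ x', q.1 x * q.1 x' * dB x x'
    (∀ M : ℕ, 2 ≤ M → E0 ≤ Etil M ∧ (((M:ℝ) - 1) / (M:ℝ)) * Etil M ≤ E0) ∧
      Filter.Tendsto Etil Filter.atTop (nhds E0) := by
  intro dB Etil E0
  have hsymm := bhattacharyyaDist_comm P
  have hdiag := bhattacharyyaDist_self hP0 hP1
  have bounds : ∀ M : ℕ, 2 ≤ M → E0 ≤ Etil M ∧ ((M : ℝ) - 1) / M * Etil M ≤ E0 := fun M hM =>
    ⟨zeroRateExponent_le_codeExponent hsymm hdiag hM,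
      mul_codeExponent_le_zeroRateExponent hsymm hdiag hM⟩
  exact ⟨bounds, tendsto_of_le_of_mul_le bounds⟩
end
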